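/- arXiv:2508.05212 — 5 statements merged into one kernel-verified Lean document; each statement's English description precedes it below -/
import Mathlib

section
/- Let (Ω, 𝔽, P) be a probability space, X : Ω → ℝ^d a random vector, Y : Ω → ℝ a random variable, β* ∈ ℝ^d, τ ∈ (0,1), and ε = Y − ⟨X, β*⟩. Let K : ℝ → ℝ be a nonnegative measurable function with K(ε) > 0 almost surely, and define the pseudo covariate X̃ = √(K(ε)) · X and pseudo response Ỹ = ⟨X̃, β*⟩ − (𝟙{ε ≤ 0} − τ)/√(K(ε)). Assume that K(ε)·X Xᵀ and X̃ Ỹ and X·(𝟙{ε ≤ 0} − τ) are integrable, that the matrix E[K(ε) X Xᵀ] is invertible, and that E[(𝟙{ε ≤ 0} − τ) X] = 0. Then (E[X̃ X̃ᵀ])⁻¹ E[X̃ Ỹ] = β*. -/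
open MeasureTheory

/-- Fixed-point property of the Newton-type transformation of quantile regression:
with pseudo covariates `X̃ = √(K(ε)) X` and pseudo response
`Ỹ = ⟨X̃, β*⟩ - (𝟙{ε ≤ 0} - τ)/√(K(ε))`, the population least-squares coefficient
`(E[X̃ X̃ᵀ])⁻¹ E[X̃ Ỹ]` equals `β*`. -/
theorem newton_transform_fixed_point
    {Ω : Type*} [MeasurableSpace Ω] (μ : Measure Ω) [IsProbabilityMeasure μ]
    {d : ℕ} (X : Ω → Fin d → ℝ) (Y : Ω → ℝ) (βs : Fin d → ℝ)
    (τ : ℝ) (hτ : τ ∈ Set.Ioo (0:ℝ) 1)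
    (ε : Ω → ℝ) (hε : ∀ ω, ε ω = Y ω - ∑ j, X ω j * βs j)
    (K : ℝ → ℝ) (hKmeas : Measurable K) (hKnonneg : ∀ u, 0 ≤ K u)
    (hKpos : ∀ᵐ ω ∂μ, 0 < K (ε ω))
    (Xt : Ω → Fin d → ℝ) (hXt : ∀ ω j, Xt ω j = Real.sqrt (K (ε ω)) * X ω j)
    (Yt : Ω → ℝ)
    (hYt : ∀ ω, Yt ω = (∑ j, Xt ω j * βs j) -
      ((if ε ω ≤ 0 then (1:ℝ) else 0) - τ) / Real.sqrt (K (ε ω)))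
    (hint1 : ∀ i j, Integrable (fun ω => K (ε ω) * (X ω i * X ω j)) μ)
    (hint2 : ∀ i, Integrable (fun ω => Xt ω i * Yt ω) μ)
    (hint3 : ∀ i, Integrable (fun ω => ((if ε ω ≤ 0 then (1:ℝ) else 0) - τ) * X ω i) μ)
    (hinv : IsUnit (Matrix.of fun i j => ∫ ω, K (ε ω) * (X ω i * X ω j) ∂μ))
    (hscore : ∀ i, ∫ ω, ((if ε ω ≤ 0 then (1:ℝ) else 0) - τ) * X ω i ∂μ = 0) :
    (Matrix.of fun i j => ∫ ω, Xt ω i * Xt ω j ∂μ)⁻¹.mulVec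
      (fun i => ∫ ω, Xt ω i * Yt ω ∂μ) = βs := by
  set M : Matrix (Fin d) (Fin d) ℝ :=
    Matrix.of fun i j => ∫ ω, K (ε ω) * (X ω i * X ω j) ∂μ with hM
  -- pointwise: Xt i * Xt j = K(ε) * (X i * X j)
  have hXtXt : ∀ ω i j, Xt ω i * Xt ω j = K (ε ω) * (X ω i * X ω j) := by
    intro ω i j
    rw [hXt, hXt, mul_mul_mul_comm, Real.mul_self_sqrt (hKnonneg (ε ω))]
  have hMeq : (Matrix.of fun i j => ∫ ω, Xt ω i * Xt ω j ∂μ) = M := by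
    ext i j
    simp only [Matrix.of_apply, hM]
    exact integral_congr_ae (Filter.Eventually.of_forall fun ω => hXtXt ω i j)
  -- the vector equals M.mulVec βs
  have hvec : (fun i => ∫ ω, Xt ω i * Yt ω ∂μ) = M.mulVec βs := by
    funext i
    have hptwise : ∀ᵐ ω ∂μ, Xt ω i * Yt ω =
        (∑ j, K (ε ω) * (X ω i * X ω j) * βs j)
          - ((if ε ω ≤ 0 then (1:ℝ) else 0) - τ) * X ω i := by
      filter_upwards [hKpos] with ω hK
      have hs : Real.sqrt (K (ε ω)) ≠ 0 := by positivity
      rw [hYt, mul_sub, Finset.mul_sum]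
      congr 1
      · exact Finset.sum_congr rfl fun j _ => by rw [← mul_assoc, hXtXt]
      · rw [hXt]
        field_simp
    have hintsum : Integrable (fun ω => ∑ j, K (ε ω) * (X ω i * X ω j) * βs j) μ :=
      integrable_finset_sum _ fun j _ => (hint1 i j).mul_const (βs j)
    rw [integral_congr_ae hptwise, integral_sub hintsum (hint3 i),
      integral_finset_sum _ (fun j _ => (hint1 i j).mul_const (βs j)), hscore i, sub_zero]
    simp only [Matrix.mulVec, dotProduct, hM, Matrix.of_apply]
    exact Finset.sum_congr rfl fun j _ => integral_mul_const _ _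
  rw [hMeq, hvec, Matrix.mulVec_mulVec, Matrix.nonsing_inv_mul M
    ((Matrix.isUnit_iff_isUnit_det M).mp hinv), Matrix.one_mulVec]
end

section
/- Let (Ω, 𝔽, P) be a probability space, X : Ω → ℝ^d a random vector, Y : Ω → ℝ a random variable, β* ∈ ℝ^d, τ ∈ (0,1), and ε = Y − ⟨X, β*⟩. Let K : ℝ → ℝ be a nonnegative measurable function with K(ε) > 0 almost surely, and define X̃ = √(K(ε)) · X and Ỹ = ⟨X̃, β*⟩ − (𝟙{ε ≤ 0} − τ)/√(K(ε)). Assume that (Ỹ − ⟨X̃, β⟩)² is integrable for every β ∈ ℝ^d, that the matrix E[K(ε) X Xᵀ] is positive definite, and that E[(𝟙{ε ≤ 0} − τ) X] = 0. Then β* is the unique global minimizer over ℝ^d of the function β ↦ E[(Ỹ − ⟨X̃, β⟩)²]; that is, E[(Ỹ − ⟨X̃, β⟩)²] > E[(Ỹ − ⟨X̃, β*⟩)²] for every β ≠ β*. -/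
/-!
The residual `e = Ỹ - ⟨X̃, β*⟩` satisfies `e X̃ = -(𝟙{ε ≤ 0} - τ) X` wherever `K(ε) > 0`, so the
score condition makes `e` orthogonal in `L²` to every coordinate of `X̃`, while `X̃ X̃ᵀ = K(ε) X Xᵀ`
makes the second-moment matrix of `X̃` positive definite. Since `Ỹ - ⟨X̃, β⟩ = e - ⟨X̃, β - β*⟩`,
Pythagoras gives `E[(Ỹ - ⟨X̃, β⟩)²] = E[e²] + (β - β*)ᵀ E[X̃ X̃ᵀ] (β - β*)`.
-/

open MeasureTheory Matrix

namespace LeastSquares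

variable {Ω ι : Type*} [MeasurableSpace Ω] [Fintype ι] {μ : Measure Ω} {Z : Ω → ι → ℝ}
  {e : Ω → ℝ}

noncomputable def secondMoment (μ : Measure Ω) (Z : Ω → ι → ℝ) : Matrix ι ι ℝ :=
  Matrix.of fun i j => ∫ ω, Z ω i * Z ω j ∂μ

-- Integrability of the square and cross terms follows by polarization from that of `(e ∓ ⟨Z, v⟩)²`.
theorem integrable_dotProduct_sq (hsq : ∀ v, Integrable (fun ω => (e ω - Z ω ⬝ᵥ v) ^ 2) μ)
    (v : ι → ℝ) : Integrable (fun ω => (Z ω ⬝ᵥ v) ^ 2) μ := by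
  refine ((((hsq (-v)).add (hsq v)).div_const 2).sub (hsq 0)).congr
    (Filter.Eventually.of_forall fun ω => ?_)
  simp only [Pi.add_apply, Pi.sub_apply, dotProduct_neg, dotProduct_zero]
  ring

theorem integrable_apply_mul_apply [DecidableEq ι]
    (hsq : ∀ v, Integrable (fun ω => (e ω - Z ω ⬝ᵥ v) ^ 2) μ) (i j : ι) :
    Integrable (fun ω => Z ω i * Z ω j) μ := by
  have h := integrable_dotProduct_sq hsq
  refine (((h (Pi.single i 1 + Pi.single j 1)).sub ((h (Pi.single i 1)).add
    (h (Pi.single j 1)))).div_const 2).congr (Filter.Eventually.of_forall fun ω => ?_)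
  simp only [Pi.add_apply, Pi.sub_apply, dotProduct_add, dotProduct_single_one]
  ring

theorem integrable_mul_dotProduct (hsq : ∀ v, Integrable (fun ω => (e ω - Z ω ⬝ᵥ v) ^ 2) μ)
    (v : ι → ℝ) : Integrable (fun ω => e ω * Z ω ⬝ᵥ v) μ := by
  refine (((hsq (-v)).sub (hsq v)).div_const 4).congr (Filter.Eventually.of_forall fun ω => ?_)
  simp only [Pi.sub_apply, dotProduct_neg]
  ring

theorem integrable_mul_apply [DecidableEq ι]
    (hsq : ∀ v, Integrable (fun ω => (e ω - Z ω ⬝ᵥ v) ^ 2) μ) (i : ι) :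
    Integrable (fun ω => e ω * Z ω i) μ := by
  simpa only [dotProduct_single_one] using integrable_mul_dotProduct hsq (Pi.single i 1)

theorem integral_mul_dotProduct (hsq : ∀ v, Integrable (fun ω => (e ω - Z ω ⬝ᵥ v) ^ 2) μ)
    (v : ι → ℝ) : ∫ ω, e ω * Z ω ⬝ᵥ v ∂μ = (fun i => ∫ ω, e ω * Z ω i ∂μ) ⬝ᵥ v := by
  classical
  simp_rw [dotProduct, Finset.mul_sum, ← mul_assoc]
  rw [integral_finsetSum _ fun i _ => (integrable_mul_apply hsq i).mul_const (v i)]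
  simp_rw [integral_mul_const]

theorem integral_dotProduct_sq (hZ : ∀ i j, Integrable (fun ω => Z ω i * Z ω j) μ)
    (v : ι → ℝ) : ∫ ω, (Z ω ⬝ᵥ v) ^ 2 ∂μ = v ⬝ᵥ secondMoment μ Z *ᵥ v := by
  have hexp : ∀ ω, (Z ω ⬝ᵥ v) ^ 2 = ∑ i, v i * ∑ j, Z ω i * Z ω j * v j := fun ω => by
    simp only [sq, dotProduct, Finset.sum_mul, Finset.mul_sum]
    exact Finset.sum_congr rfl fun i _ => Finset.sum_congr rfl fun j _ => by ring
  simp_rw [hexp]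
  rw [integral_finsetSum _ fun i _ =>
    (integrable_finsetSum _ fun j _ => (hZ i j).mul_const _).const_mul _]
  refine Finset.sum_congr rfl fun i _ => ?_
  rw [integral_const_mul, integral_finsetSum _ fun j _ => (hZ i j).mul_const _]
  simp_rw [integral_mul_const]
  rfl

theorem integral_sq_lt_integral_sq_sub_dotProduct
    (hsq : ∀ v, Integrable (fun ω => (e ω - Z ω ⬝ᵥ v) ^ 2) μ)
    (horth : ∀ i, ∫ ω, e ω * Z ω i ∂μ = 0) (hpos : (secondMoment μ Z).PosDef) {v : ι → ℝ}
    (hv : v ≠ 0) :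
    ∫ ω, e ω ^ 2 ∂μ < ∫ ω, (e ω - Z ω ⬝ᵥ v) ^ 2 ∂μ := by
  classical
  have he : Integrable (fun ω => e ω ^ 2) μ := by
    simpa only [dotProduct_zero, sub_zero] using hsq 0
  have hquad : 0 < v ⬝ᵥ secondMoment μ Z *ᵥ v := by
    simpa only [star_trivial] using hpos.dotProduct_mulVec_pos hv
  calc ∫ ω, e ω ^ 2 ∂μ
      < ∫ ω, e ω ^ 2 ∂μ - 2 * ∫ ω, e ω * Z ω ⬝ᵥ v ∂μ + ∫ ω, (Z ω ⬝ᵥ v) ^ 2 ∂μ := by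
        rw [integral_mul_dotProduct hsq, show (fun i => ∫ ω, e ω * Z ω i ∂μ) = 0 from funext horth,
          zero_dotProduct, integral_dotProduct_sq (integrable_apply_mul_apply hsq)]
        linarith
    _ = ∫ ω, (e ω ^ 2 - 2 * (e ω * Z ω ⬝ᵥ v) + (Z ω ⬝ᵥ v) ^ 2) ∂μ := by
        have hcross := (integrable_mul_dotProduct hsq v).const_mul 2
        have hdiff : Integrable (fun ω => e ω ^ 2 - 2 * (e ω * Z ω ⬝ᵥ v)) μ := he.sub hcross
        rw [integral_add hdiff (integrable_dotProduct_sq hsq v), integral_sub he hcross,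
          integral_const_mul]
    _ = ∫ ω, (e ω - Z ω ⬝ᵥ v) ^ 2 ∂μ := by congr 1 with ω; ring

end LeastSquares

open LeastSquares in
theorem newton_transform_unique_minimizer_general
    {Ω : Type*} [MeasurableSpace Ω] (μ : Measure Ω)
    {d : ℕ} (X : Ω → Fin d → ℝ) (βs : Fin d → ℝ)
    (τ : ℝ)
    (ε : Ω → ℝ)
    (K : ℝ → ℝ)
    (hKpos : ∀ᵐ ω ∂μ, 0 < K (ε ω))
    (Xt : Ω → Fin d → ℝ) (hXt : ∀ ω j, Xt ω j = Real.sqrt (K (ε ω)) * X ω j)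
    (Yt : Ω → ℝ)
    (hYt : ∀ ω, Yt ω = (∑ j, Xt ω j * βs j) -
      ((if ε ω ≤ 0 then (1:ℝ) else 0) - τ) / Real.sqrt (K (ε ω)))
    (hint : ∀ β : Fin d → ℝ,
      Integrable (fun ω => (Yt ω - ∑ j, Xt ω j * β j) ^ 2) μ)
    (hposdef : (Matrix.of fun i j => ∫ ω, K (ε ω) * (X ω i * X ω j) ∂μ).PosDef)
    (hscore : ∀ i, ∫ ω, ((if ε ω ≤ 0 then (1:ℝ) else 0) - τ) * X ω i ∂μ = 0) :
    ∀ β : Fin d → ℝ, β ≠ βs →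
      (∫ ω, (Yt ω - ∑ j, Xt ω j * βs j) ^ 2 ∂μ) <
        ∫ ω, (Yt ω - ∑ j, Xt ω j * β j) ^ 2 ∂μ := by
  intro β hβ
  set e : Ω → ℝ := fun ω => Yt ω - Xt ω ⬝ᵥ βs
  have hres : ∀ v ω, Yt ω - ∑ j, Xt ω j * v j = e ω - Xt ω ⬝ᵥ (v - βs) := fun v ω => by
    rw [dotProduct_sub]
    simp only [e, dotProduct]
    ring
  have hsq : ∀ v, Integrable (fun ω => (e ω - Xt ω ⬝ᵥ v) ^ 2) μ := fun v => by
    simpa only [hres, add_sub_cancel_right] using hint (v + βs)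
  have horth : ∀ i, ∫ ω, e ω * Xt ω i ∂μ = 0 := fun i => by
    rw [← neg_eq_zero, ← hscore i, ← integral_neg]
    refine integral_congr_ae (hKpos.mono fun ω hK => ?_)
    have : Real.sqrt (K (ε ω)) ≠ 0 := (Real.sqrt_pos.2 hK).ne'
    simp only [e, hYt, hXt, dotProduct]
    field_simp
    ring
  have hgram : secondMoment μ Xt = Matrix.of fun i j => ∫ ω, K (ε ω) * (X ω i * X ω j) ∂μ := by
    ext i j
    refine integral_congr_ae (hKpos.mono fun ω hK => ?_)
    dsimp only
    rw [hXt, hXt, mul_mul_mul_comm, Real.mul_self_sqrt hK.le]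
  simpa only [hres, sub_self, dotProduct_zero, sub_zero] using
    integral_sq_lt_integral_sq_sub_dotProduct hsq horth (hgram ▸ hposdef) (sub_ne_zero.2 hβ)

/-- `β*` is the unique global minimizer of the population least-squares risk
`β ↦ E[(Ỹ - ⟨X̃, β⟩)²]` of the Newton-type transformed quantile regression problem. -/
theorem newton_transform_unique_minimizer
    {Ω : Type*} [MeasurableSpace Ω] (μ : Measure Ω) [IsProbabilityMeasure μ]
    {d : ℕ} (X : Ω → Fin d → ℝ) (Y : Ω → ℝ) (βs : Fin d → ℝ)
    (τ : ℝ) (hτ : τ ∈ Set.Ioo (0:ℝ) 1)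
    (ε : Ω → ℝ) (hε : ∀ ω, ε ω = Y ω - ∑ j, X ω j * βs j)
    (K : ℝ → ℝ) (hKmeas : Measurable K) (hKnonneg : ∀ u, 0 ≤ K u)
    (hKpos : ∀ᵐ ω ∂μ, 0 < K (ε ω))
    (Xt : Ω → Fin d → ℝ) (hXt : ∀ ω j, Xt ω j = Real.sqrt (K (ε ω)) * X ω j)
    (Yt : Ω → ℝ)
    (hYt : ∀ ω, Yt ω = (∑ j, Xt ω j * βs j) -
      ((if ε ω ≤ 0 then (1:ℝ) else 0) - τ) / Real.sqrt (K (ε ω)))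
    (hint : ∀ β : Fin d → ℝ,
      Integrable (fun ω => (Yt ω - ∑ j, Xt ω j * β j) ^ 2) μ)
    (hposdef : (Matrix.of fun i j => ∫ ω, K (ε ω) * (X ω i * X ω j) ∂μ).PosDef)
    (hscore : ∀ i, ∫ ω, ((if ε ω ≤ 0 then (1:ℝ) else 0) - τ) * X ω i ∂μ = 0) :
    ∀ β : Fin d → ℝ, β ≠ βs →
      (∫ ω, (Yt ω - ∑ j, Xt ω j * βs j) ^ 2 ∂μ) <
        ∫ ω, (Yt ω - ∑ j, Xt ω j * β j) ^ 2 ∂μ :=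
  newton_transform_unique_minimizer_general μ X βs τ ε K hKpos Xt hXt Yt hYt hint hposdef hscore
end

section
/- Let m ≥ 1, ε > 0, Δ > 0, and let t, t' ∈ ℝ^m satisfy ‖t − t'‖₁ ≤ Δ. Let μ_t denote the product measure on ℝ^m whose i-th factor is the Laplace distribution Lap(t_i, Δ/ε), and similarly μ_{t'}. Then μ_t is (ε, 0)-close to μ_{t'}: for every measurable set A ⊆ ℝ^m, μ_t(A) ≤ e^ε · μ_{t'}(A). -/
open MeasureTheory

/-- The Laplace distribution `Lap(μ, b)` on `ℝ`, with density
`x ↦ (2b)⁻¹ exp (−|x − μ|/b)` with respect to Lebesgue measure. -/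
noncomputable def laplaceMeasure (m b : ℝ) : Measure ℝ :=
  volume.withDensity fun x => ENNReal.ofReal ((2 * b)⁻¹ * Real.exp (-|x - m| / b))

/-!
The product of the Laplace measures is the product measure with density `∏ᵢ pᵢ(xᵢ)`. By the
triangle inequality each Laplace density moves by a factor at most `exp (|tᵢ - t'ᵢ| / b)` when its
centre moves from `t'ᵢ` to `tᵢ`, so the product density moves by at most
`exp (‖t - t'‖₁ / b) ≤ exp ε` for `b = Δ / ε`, and this pointwise bound integrates over any set.
-/

open scoped ENNReal

namespace MeasureTheory

theorem withDensity_le_smul_withDensity {α : Type*} [MeasurableSpace α] {μ : Measure α}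
    {f g : α → ℝ≥0∞} (hg : Measurable g) {c : ℝ≥0∞} (hfg : ∀ x, f x ≤ c * g x) :
    μ.withDensity f ≤ c • μ.withDensity g := by
  rw [← withDensity_smul c hg]
  exact withDensity_mono (ae_of_all _ hfg)

section FinProduct

variable {α : Type*} [MeasurableSpace α] {n : ℕ} {μ : Fin n → Measure α}
  [∀ i, SigmaFinite (μ i)]

theorem lintegral_fin_nat_prod_eq_prod {f : Fin n → α → ℝ≥0∞} (hf : ∀ i, Measurable (f i)) :
    ∫⁻ x : Fin n → α, ∏ i, f i (x i) ∂(Measure.pi μ) = ∏ i, ∫⁻ x, f i x ∂(μ i) := by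
  induction n with
  | zero => simp
  | succ n ih =>
    calc _ = ∫⁻ x : α × (Fin n → α), f 0 x.1 * ∏ i : Fin n, f i.succ (x.2 i)
            ∂((μ 0).prod (Measure.pi fun i ↦ μ i.succ)) := by
          rw [← ((measurePreserving_piFinSuccAbove μ 0).symm).lintegral_comp_emb
            (MeasurableEquiv.measurableEmbedding _)]
          simp_rw [MeasurableEquiv.piFinSuccAbove_symm_apply, Fin.insertNthEquiv,
            Fin.prod_univ_succ, Fin.insertNth_zero, Equiv.coe_fn_mk, Fin.cons_succ,
            Fin.zero_succAbove, cast_eq, Fin.cons_zero]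
      _ = (∫⁻ x, f 0 x ∂μ 0) * ∏ i : Fin n, ∫⁻ x, f i.succ x ∂(μ i.succ) := by
          rw [← ih fun i ↦ hf i.succ]
          exact lintegral_prod_mul (hf 0).aemeasurable
            (Finset.measurable_prod _ fun (i : Fin n) _ ↦
              (hf i.succ).comp (measurable_pi_apply i)).aemeasurable
      _ = ∏ i, ∫⁻ x, f i x ∂(μ i) := (Fin.prod_univ_succ fun i ↦ ∫⁻ x, f i x ∂(μ i)).symm

theorem Measure.pi_withDensity {f : Fin n → α → ℝ≥0∞} (hf : ∀ i, Measurable (f i))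
    [∀ i, SigmaFinite ((μ i).withDensity (f i))] :
    Measure.pi (fun i ↦ (μ i).withDensity (f i)) =
      (Measure.pi μ).withDensity fun x ↦ ∏ i, f i (x i) := by
  refine Measure.pi_eq fun s hs ↦ ?_
  rw [withDensity_apply _ (.univ_pi hs), Measure.restrict_pi_pi,
    lintegral_fin_nat_prod_eq_prod hf]
  exact Finset.prod_congr rfl fun i _ ↦ (withDensity_apply _ (hs i)).symm

theorem Measure.pi_withDensity_le_smul {f g : Fin n → α → ℝ≥0∞}
    (hf : ∀ i, Measurable (f i)) (hg : ∀ i, Measurable (g i))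
    [∀ i, SigmaFinite ((μ i).withDensity (f i))] [∀ i, SigmaFinite ((μ i).withDensity (g i))]
    {c : Fin n → ℝ≥0∞} (hfg : ∀ i x, f i x ≤ c i * g i x) :
    Measure.pi (fun i ↦ (μ i).withDensity (f i)) ≤
      (∏ i, c i) • Measure.pi fun i ↦ (μ i).withDensity (g i) := by
  rw [Measure.pi_withDensity hf, Measure.pi_withDensity hg]
  refine withDensity_le_smul_withDensity
    (Finset.measurable_prod _ fun i _ ↦ (hg i).comp (measurable_pi_apply i)) fun x ↦ ?_
  rw [← Finset.prod_mul_distrib]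
  exact Finset.prod_le_prod' fun i _ ↦ hfg i (x i)

end FinProduct

end MeasureTheory

noncomputable def laplacePDF (c b x : ℝ) : ℝ := (2 * b)⁻¹ * Real.exp (-|x - c| / b)

theorem laplaceMeasure_eq_withDensity (c b : ℝ) :
    laplaceMeasure c b = volume.withDensity fun x ↦ ENNReal.ofReal (laplacePDF c b x) := rfl

instance (c b : ℝ) : SigmaFinite (laplaceMeasure c b) :=
  SigmaFinite.withDensity_of_ne_top (ae_of_all _ fun _ ↦ ENNReal.ofReal_ne_top)

theorem measurable_laplacePDF (c b : ℝ) : Measurable (laplacePDF c b) := by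
  unfold laplacePDF
  fun_prop

theorem laplacePDF_le_exp_mul {b : ℝ} (hb : 0 ≤ b) (c c' x : ℝ) :
    laplacePDF c b x ≤ Real.exp (|c - c'| / b) * laplacePDF c' b x := by
  have htriangle : -|x - c| / b ≤ |c - c'| / b + -|x - c'| / b := by
    rw [← add_div]
    gcongr
    linarith [abs_sub_le x c c']
  calc laplacePDF c b x ≤ (2 * b)⁻¹ * Real.exp (|c - c'| / b + -|x - c'| / b) := by
        unfold laplacePDF
        gcongr
    _ = Real.exp (|c - c'| / b) * laplacePDF c' b x := by
        rw [laplacePDF, Real.exp_add]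
        ring

theorem pi_laplaceMeasure_le_smul {n : ℕ} {b : ℝ} (hb : 0 ≤ b) (c c' : Fin n → ℝ) :
    Measure.pi (fun i ↦ laplaceMeasure (c i) b) ≤
      ENNReal.ofReal (Real.exp ((∑ i, |c i - c' i|) / b)) •
        Measure.pi fun i ↦ laplaceMeasure (c' i) b := by
  have hprod : ENNReal.ofReal (Real.exp ((∑ i, |c i - c' i|) / b)) =
      ∏ i, ENNReal.ofReal (Real.exp (|c i - c' i| / b)) := by
    rw [← ENNReal.ofReal_prod_of_nonneg fun i _ ↦ (Real.exp_pos _).le, ← Real.exp_sum,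
      Finset.sum_div]
  simp only [laplaceMeasure_eq_withDensity, hprod]
  refine Measure.pi_withDensity_le_smul (fun i ↦ (measurable_laplacePDF _ b).ennreal_ofReal)
    (fun i ↦ (measurable_laplacePDF _ b).ennreal_ofReal) fun i x ↦ ?_
  rw [← ENNReal.ofReal_mul (Real.exp_pos _).le]
  exact ENNReal.ofReal_le_ofReal (laplacePDF_le_exp_mul hb _ _ x)

theorem laplace_mechanism_dp_general
    {m : ℕ} (ε Δ : ℝ) (hε : 0 < ε) (hΔ : 0 < Δ)
    (t t' : Fin m → ℝ) (hsens : ∑ i, |t i - t' i| ≤ Δ) :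
    ∀ A : Set (Fin m → ℝ), MeasurableSet A →
      Measure.pi (fun i => laplaceMeasure (t i) (Δ / ε)) A ≤
        ENNReal.ofReal (Real.exp ε) *
          Measure.pi (fun i => laplaceMeasure (t' i) (Δ / ε)) A := by
  intro A _
  have hb : 0 < Δ / ε := div_pos hΔ hε
  have hexponent : (∑ i, |t i - t' i|) / (Δ / ε) ≤ ε := by
    rw [div_le_iff₀ hb, mul_div_cancel₀ _ hε.ne']
    exact hsens
  calc _ ≤ ENNReal.ofReal (Real.exp ((∑ i, |t i - t' i|) / (Δ / ε))) *
        Measure.pi (fun i ↦ laplaceMeasure (t' i) (Δ / ε)) A :=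
      pi_laplaceMeasure_le_smul hb.le t t' A
    _ ≤ _ := by gcongr

/-- The Laplace mechanism is `(ε, 0)`-differentially private: if `‖t - t'‖₁ ≤ Δ`,
then the product of Laplace distributions centered at `t` with scale `Δ/ε` is
`(ε, 0)`-close to the one centered at `t'`. -/
theorem laplace_mechanism_dp
    {m : ℕ} (hm : 1 ≤ m) (ε Δ : ℝ) (hε : 0 < ε) (hΔ : 0 < Δ)
    (t t' : Fin m → ℝ) (hsens : ∑ i, |t i - t' i| ≤ Δ) :
    ∀ A : Set (Fin m → ℝ), MeasurableSet A →
      Measure.pi (fun i => laplaceMeasure (t i) (Δ / ε)) A ≤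
        ENNReal.ofReal (Real.exp ε) *
          Measure.pi (fun i => laplaceMeasure (t' i) (Δ / ε)) A :=
  laplace_mechanism_dp_general ε Δ hε hΔ t t' hsens
end

section
/- Let μ₁, ν₁ be probability measures on a measurable space (S₁, 𝒮₁) and μ₂, ν₂ probability measures on a measurable space (S₂, 𝒮₂). Let ε₁, ε₂, δ₁, δ₂ ≥ 0 and suppose μ₁ is (ε₁, δ₁)-close to ν₁ and μ₂ is (ε₂, δ₂)-close to ν₂. Then the product measure μ₁ ⊗ μ₂ is (ε₁ + ε₂, δ₁ + δ₂)-close to ν₁ ⊗ ν₂: for every measurable set A ⊆ S₁ × S₂, (μ₁ ⊗ μ₂)(A) ≤ e^{ε₁+ε₂} (ν₁ ⊗ ν₂)(A) + δ₁ + δ₂. -/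
/-! Integrate over the first coordinate. Each section satisfies
`μ₂ Aₓ ≤ min 1 (e^ε₂ ν₂ Aₓ) + δ₂`, and by the layer-cake formula the `(ε₁, δ₁)` bound passes
from sets to `[0, 1]`-valued functions, in particular to `x ↦ min 1 (e^ε₂ ν₂ Aₓ)`. -/

open MeasureTheory ENNReal Set

section CloseMeasures

variable {α : Type*} [MeasurableSpace α]

theorem lintegral_eq_setLIntegral_Ioc_meas_lt (μ : Measure α) {g : α → ℝ≥0∞}
    (hg : Measurable g) (hg_le : ∀ x, g x ≤ 1) :
    ∫⁻ x, g x ∂μ = ∫⁻ t in Ioc 0 1, μ {x | t < (g x).toReal} := by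
  have htail_support : Function.support (fun t : ℝ => μ {x | t < (g x).toReal}) ⊆ Iic 1 := by
    refine Function.support_subset_iff'.mpr fun t ht => ?_
    have hempty : {x | t < (g x).toReal} = ∅ := eq_empty_of_forall_notMem fun x hx =>
      ht (hx.le.trans (toReal_le_of_le_ofReal zero_le_one (by simpa using hg_le x)))
    simp [hempty]
  calc ∫⁻ x, g x ∂μ = ∫⁻ x, ENNReal.ofReal (g x).toReal ∂μ :=
        lintegral_congr fun x => (ofReal_toReal (ne_top_of_le_ne_top one_ne_top (hg_le x))).symm
    _ = ∫⁻ t in Ioi 0, μ {x | t < (g x).toReal} :=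
        lintegral_eq_lintegral_meas_lt μ (ae_of_all _ fun _ => toReal_nonneg)
          hg.ennreal_toReal.aemeasurable
    _ = ∫⁻ t in Ioc 0 1, μ {x | t < (g x).toReal} := by
        rw [← setLIntegral_eq_of_support_subset htail_support,
          Measure.restrict_restrict measurableSet_Iic, Iic_inter_Ioi]

theorem lintegral_le_mul_lintegral_add_of_forall_measure_le {μ ν : Measure α} {c d : ℝ≥0∞}
    (h : ∀ A, MeasurableSet A → μ A ≤ c * ν A + d) {g : α → ℝ≥0∞}
    (hg : Measurable g) (hg_le : ∀ x, g x ≤ 1) :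
    ∫⁻ x, g x ∂μ ≤ c * ∫⁻ x, g x ∂ν + d := by
  have hlevel : ∀ t : ℝ, MeasurableSet {x | t < (g x).toReal} := fun t =>
    measurableSet_lt measurable_const hg.ennreal_toReal
  have htail : Measurable fun t : ℝ => ν {x | t < (g x).toReal} :=
    Antitone.measurable fun s t hst => measure_mono fun x (hx : t < _) => hst.trans_lt hx
  calc ∫⁻ x, g x ∂μ = ∫⁻ t in Ioc 0 1, μ {x | t < (g x).toReal} :=
        lintegral_eq_setLIntegral_Ioc_meas_lt μ hg hg_le
    _ ≤ ∫⁻ t in Ioc 0 1, (c * ν {x | t < (g x).toReal} + d) :=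
        lintegral_mono fun t => h _ (hlevel t)
    _ = c * (∫⁻ t in Ioc 0 1, ν {x | t < (g x).toReal}) + d := by
        rw [lintegral_add_right _ measurable_const, lintegral_const_mul c htail,
          setLIntegral_const, Real.volume_Ioc]
        norm_num
    _ = c * ∫⁻ x, g x ∂ν + d := by
        rw [lintegral_eq_setLIntegral_Ioc_meas_lt ν hg hg_le]

end CloseMeasures

theorem dp_composition_general
    {S₁ S₂ : Type*} [MeasurableSpace S₁] [MeasurableSpace S₂]
    (μ₁ ν₁ : Measure S₁) [IsProbabilityMeasure μ₁]
    (μ₂ ν₂ : Measure S₂) [IsProbabilityMeasure μ₂] [IsProbabilityMeasure ν₂]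
    (ε₁ ε₂ δ₁ δ₂ : ℝ) (hδ₁ : 0 ≤ δ₁) (hδ₂ : 0 ≤ δ₂)
    (h₁ : ∀ A : Set S₁, MeasurableSet A →
      μ₁ A ≤ ENNReal.ofReal (Real.exp ε₁) * ν₁ A + ENNReal.ofReal δ₁)
    (h₂ : ∀ A : Set S₂, MeasurableSet A →
      μ₂ A ≤ ENNReal.ofReal (Real.exp ε₂) * ν₂ A + ENNReal.ofReal δ₂) :
    ∀ A : Set (S₁ × S₂), MeasurableSet A →
      (μ₁.prod μ₂) A ≤ ENNReal.ofReal (Real.exp (ε₁ + ε₂)) * (ν₁.prod ν₂) A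
        + ENNReal.ofReal (δ₁ + δ₂) := by
  intro A hA
  set c₂ := ENNReal.ofReal (Real.exp ε₂)
  set d₂ := ENNReal.ofReal δ₂
  set g : S₁ → ℝ≥0∞ := fun x => min 1 (c₂ * ν₂ (Prod.mk x ⁻¹' A))
  have hν₂_sections : Measurable fun x => ν₂ (Prod.mk x ⁻¹' A) := measurable_measure_prodMk_left hA
  have hsection : ∀ x, μ₂ (Prod.mk x ⁻¹' A) ≤ g x + d₂ := fun x => by
    rw [← min_add_add_right]
    exact le_min (prob_le_one.trans le_self_add) (h₂ _ (measurable_prodMk_left hA))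
  calc (μ₁.prod μ₂) A = ∫⁻ x, μ₂ (Prod.mk x ⁻¹' A) ∂μ₁ := Measure.prod_apply hA
    _ ≤ ∫⁻ x, (g x + d₂) ∂μ₁ := lintegral_mono hsection
    _ = ∫⁻ x, g x ∂μ₁ + d₂ := by
        rw [lintegral_add_right _ measurable_const, lintegral_const, measure_univ, mul_one]
    _ ≤ ENNReal.ofReal (Real.exp ε₁) * ∫⁻ x, g x ∂ν₁ + ENNReal.ofReal δ₁ + d₂ := by
        gcongr
        exact lintegral_le_mul_lintegral_add_of_forall_measure_le h₁
          (measurable_const.min (hν₂_sections.const_mul c₂)) fun x => min_le_left _ _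
    _ ≤ ENNReal.ofReal (Real.exp ε₁) * ∫⁻ x, c₂ * ν₂ (Prod.mk x ⁻¹' A) ∂ν₁
          + ENNReal.ofReal δ₁ + d₂ := by
        gcongr with x
        exact min_le_right _ _
    _ = ENNReal.ofReal (Real.exp (ε₁ + ε₂)) * (ν₁.prod ν₂) A + ENNReal.ofReal (δ₁ + δ₂) := by
        rw [lintegral_const_mul c₂ hν₂_sections, ← Measure.prod_apply hA, ← mul_assoc,
          ← ofReal_mul (Real.exp_nonneg ε₁), ← Real.exp_add, ofReal_add hδ₁ hδ₂, add_assoc]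

/-- Basic composition of differential privacy: if `μ₁` is `(ε₁, δ₁)`-close to `ν₁`
and `μ₂` is `(ε₂, δ₂)`-close to `ν₂`, then `μ₁ ⊗ μ₂` is
`(ε₁ + ε₂, δ₁ + δ₂)`-close to `ν₁ ⊗ ν₂`. -/
theorem dp_composition
    {S₁ S₂ : Type*} [MeasurableSpace S₁] [MeasurableSpace S₂]
    (μ₁ ν₁ : Measure S₁) [IsProbabilityMeasure μ₁] [IsProbabilityMeasure ν₁]
    (μ₂ ν₂ : Measure S₂) [IsProbabilityMeasure μ₂] [IsProbabilityMeasure ν₂]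
    (ε₁ ε₂ δ₁ δ₂ : ℝ) (hε₁ : 0 ≤ ε₁) (hε₂ : 0 ≤ ε₂) (hδ₁ : 0 ≤ δ₁) (hδ₂ : 0 ≤ δ₂)
    (h₁ : ∀ A : Set S₁, MeasurableSet A →
      μ₁ A ≤ ENNReal.ofReal (Real.exp ε₁) * ν₁ A + ENNReal.ofReal δ₁)
    (h₂ : ∀ A : Set S₂, MeasurableSet A →
      μ₂ A ≤ ENNReal.ofReal (Real.exp ε₂) * ν₂ A + ENNReal.ofReal δ₂) :
    ∀ A : Set (S₁ × S₂), MeasurableSet A →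
      (μ₁.prod μ₂) A ≤ ENNReal.ofReal (Real.exp (ε₁ + ε₂)) * (ν₁.prod ν₂) A
        + ENNReal.ofReal (δ₁ + δ₂) :=
  dp_composition_general μ₁ ν₁ μ₂ ν₂ ε₁ ε₂ δ₁ δ₂ hδ₁ hδ₂ h₁ h₂
end

section
/- Let (Ω, 𝔽, P) be a probability space, X : Ω → ℝ^d a random vector with ‖X‖_∞ ≤ C_x almost surely for some C_x > 0, and ε : Ω → ℝ a random variable. Suppose there is a measurable function f : ℝ^d × ℝ → [0, ∞) such that: (i) for every bounded measurable g : ℝ → ℝ and every bounded measurable φ : ℝ^d → ℝ, E[g(ε) φ(X)] = E[φ(X) ∫_ℝ g(u) f(X, u) du]; and (ii) for every x ∈ ℝ^d, u ↦ f(x, u) is Lipschitz with constant l₀ ≥ 0. Let H : ℝ → ℝ be a nonnegative bounded measurable function with ∫_ℝ H(u) du = 1 and κ₁ := ∫_ℝ |u| H(u) du < ∞, and let h > 0. Then for all coordinate indices j, k ∈ {1, …, d}, |E[h⁻¹ H(ε/h) X_j X_k] − E[f(X, 0) X_j X_k]| ≤ l₀ κ₁ h C_x². -/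
open MeasureTheory

private lemma abs_int_le {α : Type*} [MeasurableSpace α] (ν : Measure α) (F : α → ℝ) :
    |∫ a, F a ∂ν| ≤ ∫ a, |F a| ∂ν := by
  simpa [Real.norm_eq_abs] using norm_integral_le_integral_norm (μ := ν) F

/-- Entrywise bias bound between the kernel-smoothed surrogate Hessian
`E[H_h(ε) X Xᵀ]` and the quantile regression Hessian `E[f_{ε|X}(0) X Xᵀ]`:
if the conditional density `f(X, ·)` of `ε` given `X` is `l₀`-Lipschitz and
`‖X‖_∞ ≤ C_x` a.s., then the bias is at most `l₀ κ₁ h C_x²` in each entry. -/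
theorem kernel_hessian_bias
    {Ω : Type*} [MeasurableSpace Ω] (μ : Measure Ω) [IsProbabilityMeasure μ]
    {d : ℕ} (X : Ω → Fin d → ℝ) (hX : Measurable X)
    (C_x : ℝ) (hCx : 0 < C_x) (hXbdd : ∀ᵐ ω ∂μ, ∀ j, |X ω j| ≤ C_x)
    (ε : Ω → ℝ) (hε : Measurable ε)
    (f : (Fin d → ℝ) → ℝ → ℝ) (hfmeas : Measurable (Function.uncurry f))
    (hfnonneg : ∀ x u, 0 ≤ f x u)
    (hdisint : ∀ g : ℝ → ℝ, Measurable g → (∃ C, ∀ u, |g u| ≤ C) →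
      ∀ φ : (Fin d → ℝ) → ℝ, Measurable φ → (∃ C, ∀ x, |φ x| ≤ C) →
        ∫ ω, g (ε ω) * φ (X ω) ∂μ = ∫ ω, φ (X ω) * ∫ u, g u * f (X ω) u ∂(volume) ∂μ)
    (l₀ : ℝ) (hl₀ : 0 ≤ l₀)
    (hfLip : ∀ x : Fin d → ℝ, ∀ u v : ℝ, |f x u - f x v| ≤ l₀ * |u - v|)
    (H : ℝ → ℝ) (hHmeas : Measurable H) (hHnonneg : ∀ u, 0 ≤ H u)
    (hHbdd : ∃ C, ∀ u, H u ≤ C) (hHone : ∫ u, H u = 1)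
    (hmom : Integrable (fun u => |u| * H u) volume)
    (κ₁ : ℝ) (hκ₁ : κ₁ = ∫ u, |u| * H u)
    (h : ℝ) (hh : 0 < h) :
    ∀ j k : Fin d,
      |(∫ ω, h⁻¹ * H (ε ω / h) * (X ω j * X ω k) ∂μ) -
        ∫ ω, f (X ω) 0 * (X ω j * X ω k) ∂μ| ≤ l₀ * κ₁ * h * C_x ^ 2 := by
  intro j k
  obtain ⟨C_H, hC_H⟩ := hHbdd
  have hκ₁nonneg : 0 ≤ κ₁ := by
    rw [hκ₁]
    exact integral_nonneg fun u => mul_nonneg (abs_nonneg _) (hHnonneg u)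
  have hRHSnonneg : 0 ≤ l₀ * κ₁ * h * C_x ^ 2 := by positivity
  -- the rescaled kernel
  set g : ℝ → ℝ := fun u => h⁻¹ * H (u / h) with hg_def
  have hg_meas : Measurable g := (hHmeas.comp (measurable_id.div_const h)).const_mul _
  have hg_nonneg : ∀ u, 0 ≤ g u := fun u =>
    mul_nonneg (inv_nonneg.mpr hh.le) (hHnonneg _)
  have hg_bdd : ∀ u, |g u| ≤ h⁻¹ * C_H := by
    intro u
    rw [abs_of_nonneg (hg_nonneg u)]
    exact mul_le_mul_of_nonneg_left (hC_H _) (inv_nonneg.mpr hh.le)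
  have hHint : Integrable H := by
    by_contra hc
    rw [integral_undef hc] at hHone
    norm_num at hHone
  have hg_int : Integrable g := ((hHint.comp_div hh.ne').const_mul _)
  have hg_one : ∫ u, g u = 1 := by
    rw [hg_def]
    rw [integral_const_mul, MeasureTheory.Measure.integral_comp_div H h, abs_of_pos hh,
      smul_eq_mul, hHone, mul_one, inv_mul_cancel₀ hh.ne']
  -- first moment of g
  have hmomg_eq : (fun u => |u| * g u) = fun u => (fun v => |v| * H v) (u / h) := by
    funext u
    simp only [hg_def]
    rw [abs_div, abs_of_pos hh]
    field_simp
  have hmomg_int : Integrable (fun u => |u| * g u) := by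
    rw [hmomg_eq]; exact hmom.comp_div hh.ne'
  have hmomg : ∫ u, |u| * g u = h * κ₁ := by
    rw [hmomg_eq, MeasureTheory.Measure.integral_comp_div (fun v => |v| * H v) h, abs_of_pos hh,
      smul_eq_mul, hκ₁]
  -- measurability of u ↦ f x u
  have hfx_meas : ∀ x, Measurable (f x) := fun x => hfmeas.of_uncurry_left
  -- integrability of g * f x
  have hgf_int : ∀ x, Integrable (fun u => g u * f x u) := by
    intro x
    apply Integrable.mono' ((hg_int.mul_const (f x 0)).add (hmomg_int.const_mul l₀))
    · exact ((hg_meas.mul (hfx_meas x)).aestronglyMeasurable)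
    · filter_upwards with u
      have h1 : f x u ≤ f x 0 + l₀ * |u| := by
        have := hfLip x u 0
        simp only [sub_zero] at this
        have := (abs_le.mp this).2
        linarith
      have : |g u * f x u| = g u * f x u := abs_of_nonneg (mul_nonneg (hg_nonneg u) (hfnonneg x u))
      rw [Real.norm_eq_abs, this]
      calc g u * f x u ≤ g u * (f x 0 + l₀ * |u|) :=
            mul_le_mul_of_nonneg_left h1 (hg_nonneg u)
        _ = g u * f x 0 + l₀ * (|u| * g u) := by ring
  -- the smoothed density
  set I : (Fin d → ℝ) → ℝ := fun x => ∫ u, g u * f x u with hI_def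
  have hI_meas : Measurable I := by
    have : StronglyMeasurable (fun p : (Fin d → ℝ) × ℝ => g p.2 * f p.1 p.2) :=
      ((hg_meas.comp measurable_snd).mul hfmeas).stronglyMeasurable
    exact this.integral_prod_right'.measurable
  -- key pointwise bound
  have hkey : ∀ x, |I x - f x 0| ≤ l₀ * (h * κ₁) := by
    intro x
    have hdiff : (∫ u, g u * (f x u - f x 0)) = I x - f x 0 := by
      have he : (fun u => g u * (f x u - f x 0)) = fun u => g u * f x u - f x 0 * g u :=
        funext fun u => by ring
      rw [he, integral_sub (hgf_int x) (hg_int.const_mul _), integral_const_mul, hg_one,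
        mul_one, hI_def]
    rw [← hdiff]
    calc |∫ u, g u * (f x u - f x 0)| ≤ ∫ u, |g u * (f x u - f x 0)| :=
          abs_int_le _ _
      _ ≤ ∫ u, l₀ * (|u| * g u) := by
          apply integral_mono_of_nonneg
          · filter_upwards with u; exact abs_nonneg _
          · exact hmomg_int.const_mul l₀
          · filter_upwards with u
            rw [abs_mul, abs_of_nonneg (hg_nonneg u)]
            have := hfLip x u 0
            simp only [sub_zero] at this
            calc g u * |f x u - f x 0| ≤ g u * (l₀ * |u|) :=
                  mul_le_mul_of_nonneg_left this (hg_nonneg u)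
              _ = l₀ * (|u| * g u) := by ring
      _ = l₀ * (h * κ₁) := by rw [integral_const_mul, hmomg]
  -- truncated product
  set φ : (Fin d → ℝ) → ℝ := fun x =>
    (max (-C_x) (min C_x (x j))) * (max (-C_x) (min C_x (x k))) with hφ_def
  have hφ_meas : Measurable φ := by
    exact (measurable_const.max (measurable_const.min (measurable_pi_apply j))).mul
      (measurable_const.max (measurable_const.min (measurable_pi_apply k)))
  have hclamp_bdd : ∀ y : ℝ, |max (-C_x) (min C_x y)| ≤ C_x := by
    intro y
    rw [abs_le]
    constructor
    · exact le_max_left _ _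
    · exact max_le (by linarith) (min_le_left _ _)
  have hφ_bdd : ∀ x, |φ x| ≤ C_x * C_x := by
    intro x
    rw [hφ_def]
    simp only
    rw [abs_mul]
    exact mul_le_mul (hclamp_bdd _) (hclamp_bdd _) (abs_nonneg _) hCx.le
  have hφX_ae : ∀ᵐ ω ∂μ, φ (X ω) = X ω j * X ω k := by
    filter_upwards [hXbdd] with ω hω
    have e : ∀ i : Fin d, max (-C_x) (min C_x (X ω i)) = X ω i := by
      intro i
      rw [min_eq_right (abs_le.mp (hω i)).2, max_eq_right (abs_le.mp (hω i)).1]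
    rw [hφ_def]; simp only [e]
  -- apply disintegration
  have hdis := hdisint g hg_meas ⟨h⁻¹ * C_H, hg_bdd⟩ φ hφ_meas ⟨C_x * C_x, hφ_bdd⟩
  have hLHS : (∫ ω, h⁻¹ * H (ε ω / h) * (X ω j * X ω k) ∂μ) = ∫ ω, φ (X ω) * I (X ω) ∂μ := by
    rw [← hdis]
    apply integral_congr_ae
    filter_upwards [hφX_ae] with ω hω
    rw [hω]
  have hRHS : (∫ ω, f (X ω) 0 * (X ω j * X ω k) ∂μ) = ∫ ω, φ (X ω) * f (X ω) 0 ∂μ := by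
    apply integral_congr_ae
    filter_upwards [hφX_ae] with ω hω
    rw [hω]; ring
  rw [hLHS, hRHS]
  -- the bounded "bias" term
  have hB_int : Integrable (fun ω => φ (X ω) * (I (X ω) - f (X ω) 0)) μ := by
    apply Integrable.mono' (integrable_const (C_x * C_x * (l₀ * (h * κ₁))))
    · exact ((hφ_meas.comp hX).mul ((hI_meas.comp hX).sub
        ((hfmeas.comp (hX.prodMk measurable_const))))).aestronglyMeasurable
    · filter_upwards with ω
      rw [Real.norm_eq_abs, abs_mul]
      exact mul_le_mul (hφ_bdd _) (hkey _) (abs_nonneg _)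
        (mul_nonneg hCx.le hCx.le)
  have hbound : |∫ ω, φ (X ω) * (I (X ω) - f (X ω) 0) ∂μ| ≤ l₀ * κ₁ * h * C_x ^ 2 := by
    calc |∫ ω, φ (X ω) * (I (X ω) - f (X ω) 0) ∂μ|
        ≤ ∫ ω, |φ (X ω) * (I (X ω) - f (X ω) 0)| ∂μ := abs_int_le _ _
      _ ≤ ∫ _ω, C_x * C_x * (l₀ * (h * κ₁)) ∂μ := by
          apply integral_mono_of_nonneg
          · filter_upwards with ω; exact abs_nonneg _
          · exact integrable_const _
          · filter_upwards with ω
            rw [abs_mul]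
            exact mul_le_mul (hφ_bdd _) (hkey _) (abs_nonneg _) (mul_nonneg hCx.le hCx.le)
      _ = C_x * C_x * (l₀ * (h * κ₁)) := by
          rw [integral_const]; simp
      _ = l₀ * κ₁ * h * C_x ^ 2 := by ring
  by_cases hInt : Integrable (fun ω => φ (X ω) * f (X ω) 0) μ
  · have hsplit : (∫ ω, φ (X ω) * I (X ω) ∂μ) =
        (∫ ω, φ (X ω) * f (X ω) 0 ∂μ) + ∫ ω, φ (X ω) * (I (X ω) - f (X ω) 0) ∂μ := by
      rw [← integral_add hInt hB_int]
      congr 1; funext ω; ring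
    rw [hsplit]
    simpa using hbound
  · have hInt2 : ¬ Integrable (fun ω => φ (X ω) * I (X ω)) μ := by
      intro hc
      apply hInt
      have : (fun ω => φ (X ω) * f (X ω) 0) =
          fun ω => φ (X ω) * I (X ω) - φ (X ω) * (I (X ω) - f (X ω) 0) := by
        funext ω; ring
      rw [this]
      exact hc.sub hB_int
    rw [integral_undef hInt, integral_undef hInt2]
    simpa using hRHSnonneg
end
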